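/- arXiv:1410.2142 — 2 statements merged into one kernel-verified Lean document; each statement's English description precedes it below -/
import Mathlib

section
/- Let k ≥ 2 and n ≥ 400k². If G is a graph of order n with q(G) ≥ q(S_{n,k}^+), then e(G) ≥ kn − k² + 1. -/
open scoped Classical

/-- The signless Laplacian matrix `Q(G) = D(G) + A(G)` of a finite simple graph. -/
noncomputable def signlessLaplacian {V : Type*} [Fintype V] (G : SimpleGraph V) :
    Matrix V V ℝ :=
  Matrix.diagonal (fun v => (G.degree v : ℝ)) + G.adjMatrix ℝ

/-- The `Q`-index of `G`: the largest eigenvalue of the signless Laplacian. -/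
noncomputable def qIndex {V : Type*} [Fintype V] (G : SimpleGraph V) : ℝ :=
  sSup (spectrum ℝ (signlessLaplacian G))

/-- `G` contains a copy of `F` (a subgraph isomorphic to `F`). -/
def HasCopy {α β : Type*} (F : SimpleGraph α) (G : SimpleGraph β) : Prop :=
  ∃ f : F →g G, Function.Injective f

/-- The graph `S_{n,k}^+`: a `k`-clique joined to an independent set of `n - k`
vertices, with one extra edge added inside the independent set
(between vertices `k` and `k+1`). -/
def SnkPlus (n k : ℕ) : SimpleGraph (Fin n) where
  Adj i j := i ≠ j ∧ ((i : ℕ) < k ∨ (j : ℕ) < k ∨ ((i : ℕ) < k + 2 ∧ (j : ℕ) < k + 2))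
  symm := by constructor; intro i j h; exact ⟨h.1.symm, by tauto⟩
  loopless := by constructor; intro i h; exact h.1 rfl

/-- `L_{t,k} = K_1 ∨ (t · K_k)`: `t` copies of `K_{k+1}` sharing one common vertex
(vertex `0`, the center). -/
def Lgraph (t k : ℕ) : SimpleGraph (Fin (t * k + 1)) where
  Adj i j := i ≠ j ∧ ((i : ℕ) = 0 ∨ (j : ℕ) = 0 ∨ ((i : ℕ) - 1) / k = ((j : ℕ) - 1) / k)
  symm := by constructor; intro i j h; exact ⟨h.1.symm, by tauto⟩
  loopless := by constructor; intro i h; exact h.1 rfl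

/-- Disjoint union of `t` copies of `K_{k+1}`. -/
def disjointCliques (t k : ℕ) : SimpleGraph (Fin t × Fin (k + 1)) where
  Adj i j := i ≠ j ∧ i.1 = j.1
  symm := by constructor; intro i j h; exact ⟨h.1.symm, h.2.symm⟩
  loopless := by constructor; intro i h; exact h.1 rfl

/-- `K_1 ∨ ((t-1)·K_k ∪ K_{k+1})` on `t*k + 2` vertices: vertex `0` is the center,
the last block has `k+1` vertices. -/
def Mgraph (t k : ℕ) : SimpleGraph (Fin (t * k + 2)) where
  Adj i j := i ≠ j ∧ ((i : ℕ) = 0 ∨ (j : ℕ) = 0 ∨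
    min (((i : ℕ) - 1) / k) (t - 1) = min (((j : ℕ) - 1) / k) (t - 1))
  symm := by constructor; intro i j h; exact ⟨h.1.symm, by tauto⟩
  loopless := by constructor; intro i h; exact h.1 rfl

/-- Two disjoint graphs `L_{s,k}` and `L_{t,k}` with their centers joined by an edge. -/
def DLgraph (s t k : ℕ) : SimpleGraph (Fin (s * k + 1) ⊕ Fin (t * k + 1)) where
  Adj x y :=
    match x, y with
    | .inl a, .inl b => (Lgraph s k).Adj a b
    | .inr a, .inr b => (Lgraph t k).Adj a b
    | .inl a, .inr b => (a : ℕ) = 0 ∧ (b : ℕ) = 0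
    | .inr a, .inl b => (a : ℕ) = 0 ∧ (b : ℕ) = 0
  symm := by
    constructor
    intro x y h
    cases x <;> cases y <;> simp_all <;>
      first
        | exact ((Lgraph _ _).adj_symm h)
  loopless := by
    constructor
    intro x h
    cases x
    · exact (Lgraph s k).irrefl h
    · exact (Lgraph t k).irrefl h

/-- Number of edges of `G` lying inside the vertex set `X`. -/
noncomputable def edgesWithin {V : Type*} [Fintype V] (G : SimpleGraph V) (X : Finset V) : ℕ :=
  (G.induce (X : Set V)).edgeFinset.card

/-- Number of edges of `G` joining the disjoint vertex sets `X` and `Y`. -/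
noncomputable def edgesBetween {V : Type*} [Fintype V] (G : SimpleGraph V)
    (X Y : Finset V) : ℕ :=
  ((X ×ˢ Y).filter fun p => G.Adj p.1 p.2).card
open Matrix in
lemma spectrum_eq_range_eigenvalues {V : Type*} [Fintype V]
    {A : Matrix V V ℝ} (hA : A.IsHermitian) :
    spectrum ℝ A = Set.range hA.eigenvalues := by
  conv_lhs => rw [hA.spectral_theorem]
  rw [Unitary.conjStarAlgAut_apply, Unitary.spectrum_star_right_conjugate]
  have h : (RCLike.ofReal ∘ hA.eigenvalues : V → ℝ) = hA.eigenvalues := by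
    ext i; simp
  rw [h, spectrum_diagonal]

open Matrix in
lemma rayleigh_le_sSup_spectrum {V : Type*} [Fintype V] [Nonempty V]
    {A : Matrix V V ℝ} (hA : A.IsHermitian) (x : V → ℝ) :
    x ⬝ᵥ A.mulVec x ≤ sSup (spectrum ℝ A) * (x ⬝ᵥ x) := by
  set t := sSup (spectrum ℝ A) with ht
  have hspec := spectrum_eq_range_eigenvalues hA
  have hbdd : BddAbove (spectrum ℝ A) := hspec ▸ (Set.finite_range _).bddAbove
  have hle : ∀ i, hA.eigenvalues i ≤ t :=
    fun i => le_csSup hbdd (hspec ▸ Set.mem_range_self i)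
  have hdiag : (Matrix.diagonal (fun i => t - hA.eigenvalues i) : Matrix V V ℝ).PosSemidef :=
    Matrix.PosSemidef.diagonal (fun i => sub_nonneg.2 (hle i))
  set U := (hA.eigenvectorUnitary : Matrix V V ℝ) with hU
  have hM : (t • (1 : Matrix V V ℝ) - A).PosSemidef := by
    have h2 := hdiag.mul_mul_conjTranspose_same U
    have h3 : U * Matrix.diagonal (fun i => t - hA.eigenvalues i) * Uᴴ
        = t • (1 : Matrix V V ℝ) - A := by
      have hd : (Matrix.diagonal (fun i => t - hA.eigenvalues i) : Matrix V V ℝ)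
          = t • (1 : Matrix V V ℝ) - Matrix.diagonal hA.eigenvalues := by
        ext i j
        by_cases hij : i = j <;>
          simp [Matrix.diagonal_apply, hij, Matrix.one_apply]
      have hUU : U * star U = 1 :=
        (Matrix.mem_unitaryGroup_iff).mp hA.eigenvectorUnitary.2
      have hAeq : A = U * Matrix.diagonal hA.eigenvalues * star U := by
        have h := hA.spectral_theorem
        have h' : (RCLike.ofReal ∘ hA.eigenvalues : V → ℝ) = hA.eigenvalues := by ext i; simp
        rw [h', Unitary.conjStarAlgAut_apply, ← hU] at h
        exact h
      calc U * Matrix.diagonal (fun i => t - hA.eigenvalues i) * Uᴴ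
          = U * (t • (1 : Matrix V V ℝ)) * Uᴴ - U * Matrix.diagonal hA.eigenvalues * Uᴴ := by
            rw [hd, Matrix.mul_sub, Matrix.sub_mul]
        _ = t • (U * star U) - A := by
            rw [mul_smul_comm, Matrix.mul_one, Matrix.smul_mul, ← Matrix.star_eq_conjTranspose,
              ← hAeq]
        _ = t • (1 : Matrix V V ℝ) - A := by rw [hUU]
    rw [h3] at h2
    exact h2
  have h0 := hM.dotProduct_mulVec_nonneg x
  have hsx : star x = x := by ext i; simp
  rw [hsx, Matrix.sub_mulVec, Matrix.smul_mulVec, Matrix.one_mulVec,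
    dotProduct_sub, dotProduct_smul] at h0
  simp only [smul_eq_mul] at h0
  linarith


open Matrix in
lemma signlessLaplacian_isHermitian {V : Type*} [Fintype V] (G : SimpleGraph V) :
    (signlessLaplacian G).IsHermitian := by
  classical
  refine Matrix.IsHermitian.add (Matrix.isHermitian_diagonal _) ?_
  show (SimpleGraph.adjMatrix ℝ G)ᴴ = SimpleGraph.adjMatrix ℝ G
  ext i j
  simp [Matrix.conjTranspose_apply, SimpleGraph.adj_comm]

lemma das_count {n : ℕ} (hn : 2 ≤ n) (G : SimpleGraph (Fin n)) (v : Fin n)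
    (hd : 1 ≤ G.degree v) :
    G.degree v * G.degree v * (n - 1) + (∑ u ∈ G.neighborFinset v, G.degree u) * (n - 1)
      ≤ G.degree v * ((n - 1) * (n - 2)) + 2 * G.edgeFinset.card * G.degree v := by
  classical
  set N := G.neighborFinset v with hNdef
  set W := (Finset.univ.erase v) \ N with hWdef
  have hNsub : N ⊆ Finset.univ.erase v := by
    intro u hu
    exact Finset.mem_erase.2 ⟨((G.mem_neighborFinset v u).1 hu).ne', Finset.mem_univ u⟩
  have hNW : Disjoint N W := Finset.disjoint_sdiff
  have hunion : N ∪ W = Finset.univ.erase v := Finset.union_sdiff_of_subset hNsub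
  have hvNW : v ∉ N ∪ W := by rw [hunion]; simp
  have huniv : (Finset.univ : Finset (Fin n)) = insert v (N ∪ W) := by
    rw [hunion, Finset.insert_erase (Finset.mem_univ v)]
  have hsplit : ∀ f : Fin n → ℕ, ∑ z, f z = f v + (∑ z ∈ N, f z + ∑ z ∈ W, f z) := by
    intro f
    rw [huniv, Finset.sum_insert hvNW, Finset.sum_union hNW]
  have hdeg : ∀ u : Fin n, G.degree u = ∑ z, if G.Adj u z then 1 else 0 := by
    intro u
    rw [← Finset.card_filter, SimpleGraph.degree, SimpleGraph.neighborFinset_eq_filter]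
  set d := G.degree v with hdv
  have hdN : N.card = d := rfl
  set w := W.card with hw
  have hcard : d + w + 1 = n := by
    have h1 : N.card + W.card = n - 1 := by
      rw [← Finset.card_union_of_disjoint hNW, hunion,
        Finset.card_erase_of_mem (Finset.mem_univ v), Finset.card_univ, Fintype.card_fin]
    omega
  set S := ∑ u ∈ N, G.degree u with hS
  set Ac := ∑ u ∈ N, ∑ z ∈ N, (if G.Adj u z then 1 else 0) with hAc
  set Bc := ∑ u ∈ N, ∑ z ∈ W, (if G.Adj u z then 1 else 0) with hBc
  set R := ∑ z ∈ W, G.degree z with hR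
  have hSsplit : S = d + Ac + Bc := by
    have h1 : ∀ u ∈ N, G.degree u
        = 1 + (∑ z ∈ N, (if G.Adj u z then 1 else 0) + ∑ z ∈ W, (if G.Adj u z then 1 else 0)) := by
      intro u hu
      rw [hdeg u, hsplit (fun z => if G.Adj u z then 1 else 0),
        if_pos (((G.mem_neighborFinset v u).1 hu).symm)]
    rw [hS, Finset.sum_congr rfl h1, Finset.sum_add_distrib, Finset.sum_add_distrib,
      Finset.sum_const, smul_eq_mul, mul_one, hdN, ← hAc, ← hBc]
    ring
  have hA_le : Ac ≤ d * (d - 1) := by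
    have hinner : ∀ u ∈ N, (∑ z ∈ N, if G.Adj u z then 1 else 0) ≤ d - 1 := by
      intro u hu
      have h0 : (if G.Adj u u then 1 else 0) = 0 := by simp
      rw [← Finset.sum_erase N h0]
      have h2 := Finset.sum_le_card_nsmul (N.erase u) _ 1
        (fun z _ => (by split <;> omega : (if G.Adj u z then 1 else 0) ≤ 1))
      rw [Finset.card_erase_of_mem hu, hdN, smul_eq_mul, mul_one] at h2
      exact h2
    calc Ac ≤ ∑ _u ∈ N, (d - 1) := Finset.sum_le_sum hinner
      _ = d * (d - 1) := by rw [Finset.sum_const, smul_eq_mul, hdN]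
  have hB_le : Bc ≤ d * w := by
    have hinner : ∀ u ∈ N, (∑ z ∈ W, if G.Adj u z then 1 else 0) ≤ w := by
      intro u _
      have h2 := Finset.sum_le_card_nsmul W _ 1
        (fun z _ => (by split <;> omega : (if G.Adj u z then 1 else 0) ≤ 1))
      rw [smul_eq_mul, mul_one] at h2
      exact h2
    calc Bc ≤ ∑ _u ∈ N, w := Finset.sum_le_sum hinner
      _ = d * w := by rw [Finset.sum_const, smul_eq_mul, hdN]
  have hR_ge : Bc ≤ R := by
    have hswap : Bc = ∑ z ∈ W, ∑ u ∈ N, (if G.Adj z u then 1 else 0) := by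
      rw [hBc, Finset.sum_comm]
      refine Finset.sum_congr rfl fun z _ => Finset.sum_congr rfl fun u _ => ?_
      rw [SimpleGraph.adj_comm]
    rw [hswap, hR]
    refine Finset.sum_le_sum fun z _ => ?_
    rw [hdeg z]
    exact Finset.sum_le_sum_of_subset_of_nonneg (Finset.subset_univ N)
      (fun _ _ _ => by split <;> omega)
  have h2m : 2 * G.edgeFinset.card = d + (S + R) := by
    rw [← SimpleGraph.sum_degrees_eq_twice_card_edges, hsplit (fun z => G.degree z)]
  -- pass to integers
  have hd1 : (1 : ℤ) ≤ (d : ℤ) := by exact_mod_cast hd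
  have hd0 : (0 : ℤ) ≤ (d : ℤ) := by linarith
  have hw0 : (0 : ℤ) ≤ (w : ℤ) := Int.natCast_nonneg w
  have hAc0 : (0 : ℤ) ≤ (Ac : ℤ) := Int.natCast_nonneg Ac
  have hBc0 : (0 : ℤ) ≤ (Bc : ℤ) := Int.natCast_nonneg Bc
  have hR0 : (0 : ℤ) ≤ (R : ℤ) := Int.natCast_nonneg R
  have hAZ : (Ac : ℤ) ≤ (d : ℤ) * ((d : ℤ) - 1) := by
    have h := hA_le
    zify [hd] at h
    exact h
  have hBZ : (Bc : ℤ) ≤ (d : ℤ) * w := by exact_mod_cast hB_le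
  have hRZ : (Bc : ℤ) ≤ (R : ℤ) := by exact_mod_cast hR_ge
  have hSZ : (S : ℤ) = d + Ac + Bc := by exact_mod_cast hSsplit
  have h2mZ : 2 * (G.edgeFinset.card : ℤ) = d + (S + R) := by exact_mod_cast h2m
  have hnZ : (n : ℤ) = d + w + 1 := by exact_mod_cast hcard.symm
  zify [show 1 ≤ n by omega, hn]
  have h2md : 2 * (G.edgeFinset.card : ℤ) * d = (d + (S + R)) * d := by rw [h2mZ]
  rw [hnZ]
  have hSd : (S : ℤ) * d = ((d : ℤ) + Ac + Bc) * d := by rw [hSZ]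
  have hSw : (S : ℤ) * w = ((d : ℤ) + Ac + Bc) * w := by rw [hSZ]
  have hww : (0 : ℤ) ≤ (w : ℤ) * ((w : ℤ) - 1) := by
    rcases Nat.eq_zero_or_pos w with hw' | hw'
    · have hwz : (w : ℤ) = 0 := by exact_mod_cast hw'
      rw [hwz]; simp
    · have hw1 : (1 : ℤ) ≤ (w : ℤ) := by exact_mod_cast hw'
      exact mul_nonneg hw0 (by linarith)
  rcases le_or_gt (w : ℤ) (d : ℤ) with hcase | hcase
  · linarith [mul_nonneg hw0 (sub_nonneg.2 hAZ),
      mul_nonneg hd0 hww,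
      mul_nonneg hBc0 (sub_nonneg.2 hcase),
      mul_nonneg hd0 (sub_nonneg.2 hRZ), h2md, hSd, hSw]
  · linarith [mul_nonneg hw0 (sub_nonneg.2 hAZ),
      mul_nonneg hd0 (sub_nonneg.2 hRZ),
      mul_nonneg (sub_nonneg.2 hBZ) (by linarith : (0:ℤ) ≤ (w:ℤ) - d),
      mul_nonneg (mul_nonneg hd0 hw0) (by linarith : (0:ℤ) ≤ (d:ℤ) - 1), h2md, hSd, hSw]


open Matrix in
lemma sSup_spectrum_le {V : Type*} [Fintype V]
    {A : Matrix V V ℝ} (hA : A.IsHermitian) {B : ℝ} (hB : 0 ≤ B)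
    (h : ∀ (lam : ℝ) (x : V → ℝ), x ≠ 0 → A.mulVec x = lam • x → lam ≤ B) :
    sSup (spectrum ℝ A) ≤ B := by
  apply Real.sSup_le _ hB
  intro y hy
  rw [spectrum_eq_range_eigenvalues hA] at hy
  obtain ⟨i, rfl⟩ := hy
  refine h _ (⇑(hA.eigenvectorBasis i)) ?_ (hA.mulVec_eigenvectorBasis i)
  have hne := hA.eigenvectorBasis.orthonormal.ne_zero i
  intro hc
  apply hne
  ext j
  exact congrFun hc j

open Matrix in
lemma das_bound {n : ℕ} (hn : 2 ≤ n) (G : SimpleGraph (Fin n))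
    {lam : ℝ} {x : Fin n → ℝ} (hx : x ≠ 0)
    (heig : (signlessLaplacian G).mulVec x = lam • x) :
    lam ≤ (n : ℝ) - 2 + 2 * (G.edgeFinset.card : ℝ) / ((n : ℝ) - 1) := by
  classical
  have hn2 : (2:ℝ) ≤ (n:ℝ) := by exact_mod_cast hn
  have hn1 : (0:ℝ) < (n:ℝ) - 1 := by linarith
  have hB0 : (0:ℝ) ≤ (n : ℝ) - 2 + 2 * (G.edgeFinset.card : ℝ) / ((n : ℝ) - 1) := by
    have h1 : (0:ℝ) ≤ 2 * (G.edgeFinset.card : ℝ) / ((n : ℝ) - 1) := by positivity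
    linarith
  by_cases hlam : lam ≤ 0
  · linarith
  push_neg at hlam
  set s : Fin n → ℝ := fun u => max (G.degree u : ℝ) 1 with hs
  have hs_pos : ∀ u, 0 < s u := fun u => lt_of_lt_of_le one_pos (le_max_right _ _)
  have hne : (Finset.univ : Finset (Fin n)).Nonempty := ⟨⟨0, by omega⟩, Finset.mem_univ _⟩
  obtain ⟨v, -, hvmax⟩ := Finset.exists_max_image Finset.univ (fun u => |x u| / s u) hne
  obtain ⟨u0, hu0⟩ := Function.ne_iff.1 hx
  have hu0' : 0 < |x u0| / s u0 := div_pos (abs_pos.2 (by simpa using hu0)) (hs_pos u0)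
  have hxv : 0 < |x v| := by
    have h2 : 0 < |x v| / s v := lt_of_lt_of_le hu0' (hvmax u0 (Finset.mem_univ u0))
    by_contra h3
    push_neg at h3
    rw [le_antisymm h3 (abs_nonneg _), zero_div] at h2
    exact lt_irrefl 0 h2
  have heq : lam * x v = (G.degree v : ℝ) * x v + ∑ z ∈ G.neighborFinset v, x z := by
    have h1 := congrFun heig v
    rw [signlessLaplacian] at h1
    simp only [Matrix.add_mulVec, Pi.add_apply, Matrix.mulVec_diagonal,
      SimpleGraph.adjMatrix_mulVec_apply, Pi.smul_apply, smul_eq_mul] at h1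
    exact h1.symm
  set S : ℝ := ∑ u ∈ G.neighborFinset v, (G.degree u : ℝ) with hSdef
  have habs : lam * |x v| ≤ (G.degree v : ℝ) * |x v| + S * (|x v| / s v) := by
    have h1 : lam * |x v| = |lam * x v| := by rw [abs_mul, abs_of_pos hlam]
    rw [h1, heq]
    calc |(G.degree v : ℝ) * x v + ∑ z ∈ G.neighborFinset v, x z|
        ≤ |(G.degree v : ℝ) * x v| + |∑ z ∈ G.neighborFinset v, x z| := abs_add_le _ _
      _ ≤ (G.degree v : ℝ) * |x v| + ∑ z ∈ G.neighborFinset v, |x z| := by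
          gcongr
          · rw [abs_mul, abs_of_nonneg (by positivity : (0:ℝ) ≤ (G.degree v:ℝ))]
          · exact Finset.abs_sum_le_sum_abs _ _
      _ ≤ (G.degree v : ℝ) * |x v| + ∑ z ∈ G.neighborFinset v, (G.degree z : ℝ) * (|x v| / s v) := by
          gcongr with z hz
          have hdz : 1 ≤ G.degree z := by
            rw [Nat.one_le_iff_ne_zero, ← Nat.pos_iff_ne_zero, SimpleGraph.degree_pos_iff_exists_adj]
            exact ⟨v, ((G.mem_neighborFinset v z).1 hz).symm⟩
          have hsz : s z = (G.degree z : ℝ) := max_eq_left (by exact_mod_cast hdz)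
          have h2 := hvmax z (Finset.mem_univ z)
          have h3 : |x z| ≤ s z * (|x v| / s v) := by
            rw [← div_le_iff₀' (hs_pos z)]
            exact h2
          rw [hsz] at h3
          exact h3
      _ = (G.degree v : ℝ) * |x v| + S * (|x v| / s v) := by
          rw [hSdef, Finset.sum_mul]
  by_cases hdv : G.degree v = 0
  · exfalso
    have hNempty : G.neighborFinset v = ∅ := Finset.card_eq_zero.1 hdv
    have hS0 : S = 0 := by rw [hSdef, hNempty, Finset.sum_empty]
    rw [hS0, hdv] at habs
    simp only [Nat.cast_zero, zero_mul, zero_add, add_zero] at habs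
    nlinarith
  · have hd1 : 1 ≤ G.degree v := Nat.one_le_iff_ne_zero.2 hdv
    have hdR : (0:ℝ) < (G.degree v : ℝ) := by exact_mod_cast hd1
    have hsv : s v = (G.degree v : ℝ) := max_eq_left (by exact_mod_cast hd1)
    have hS0 : 0 ≤ S := by
      rw [hSdef]; exact Finset.sum_nonneg fun z _ => by positivity
    have hlam_le : lam ≤ (G.degree v : ℝ) + S / (G.degree v : ℝ) := by
      have h2 : lam * |x v| ≤ ((G.degree v : ℝ) + S / (G.degree v : ℝ)) * |x v| := by
        rw [hsv] at habs
        calc lam * |x v| ≤ (G.degree v : ℝ) * |x v| + S * (|x v| / (G.degree v : ℝ)) := habs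
          _ = ((G.degree v : ℝ) + S / (G.degree v : ℝ)) * |x v| := by ring
      exact le_of_mul_le_mul_right h2 hxv
    have hcount := das_count hn G v hd1
    have h4 : ((G.degree v * G.degree v * (n-1) + (∑ u ∈ G.neighborFinset v, G.degree u) * (n-1) : ℕ) : ℝ)
        ≤ ((G.degree v * ((n-1)*(n-2)) + 2*G.edgeFinset.card*G.degree v : ℕ) : ℝ) :=
      Nat.cast_le.2 hcount
    push_cast [Nat.cast_sub (show 1 ≤ n by omega), Nat.cast_sub hn] at h4
    refine le_trans hlam_le ?_
    have e1 : (G.degree v : ℝ) + S / (G.degree v : ℝ)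
        = ((G.degree v : ℝ) * (G.degree v : ℝ) + S) / (G.degree v : ℝ) := by
      field_simp
    have e2 : (n:ℝ) - 2 + 2 * (G.edgeFinset.card : ℝ) / ((n:ℝ)-1)
        = (((n:ℝ)-2)*((n:ℝ)-1) + 2*(G.edgeFinset.card : ℝ)) / ((n:ℝ)-1) := by
      field_simp
      try ring
    rw [e1, e2, div_le_div_iff₀ hdR hn1]
    rw [hSdef]
    linarith [h4]

lemma qIndex_le_das {n : ℕ} (hn : 2 ≤ n) (G : SimpleGraph (Fin n)) :
    qIndex G ≤ (n : ℝ) - 2 + 2 * (G.edgeFinset.card : ℝ) / ((n : ℝ) - 1) := by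
  have hn2 : (2:ℝ) ≤ (n:ℝ) := by exact_mod_cast hn
  have hn1 : (0:ℝ) < (n:ℝ) - 1 := by linarith
  have hB0 : (0:ℝ) ≤ (n : ℝ) - 2 + 2 * (G.edgeFinset.card : ℝ) / ((n : ℝ) - 1) := by
    have h1 : (0:ℝ) ≤ 2 * (G.edgeFinset.card : ℝ) / ((n : ℝ) - 1) := by positivity
    linarith
  rw [qIndex]
  exact sSup_spectrum_le (signlessLaplacian_isHermitian G) hB0
    (fun lam x hx heig => das_bound hn G hx heig)


lemma Kcard {n k : ℕ} (hkn : k ≤ n) :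
    (Finset.univ.filter (fun i : Fin n => (i:ℕ) < k)).card = k := by
  have h : Finset.univ.filter (fun i : Fin n => (i:ℕ) < k)
      = Finset.map (Fin.castLEEmb hkn) Finset.univ := by
    ext j
    rw [Finset.mem_map, Finset.mem_filter]
    constructor
    · rintro ⟨-, hj⟩
      exact ⟨⟨(j:ℕ), hj⟩, Finset.mem_univ _, by ext; simp⟩
    · rintro ⟨i, -, rfl⟩
      exact ⟨Finset.mem_univ _, by simpa using i.isLt⟩
  rw [h, Finset.card_map, Finset.card_univ, Fintype.card_fin]

lemma sum_if_const {n k : ℕ} (hkn : k ≤ n) (c1 c2 : ℝ) :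
    (∑ u : Fin n, if (u:ℕ) < k then c1 else c2) = k * c1 + ((n:ℝ) - k) * c2 := by
  rw [Finset.sum_ite, Finset.sum_const, Finset.sum_const, Kcard hkn]
  have h2 : (Finset.univ.filter (fun i : Fin n => ¬ (i:ℕ) < k)).card = n - k := by
    have h3 := Finset.card_filter_add_card_filter_not
      (s := (Finset.univ : Finset (Fin n))) (p := fun i : Fin n => (i:ℕ) < k)
    rw [Kcard hkn, Finset.card_univ, Fintype.card_fin] at h3
    omega
  rw [h2, nsmul_eq_mul, nsmul_eq_mul]
  push_cast [Nat.cast_sub hkn]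
  ring


open Matrix in
set_option maxHeartbeats 2000000 in
/-- If `q(G) ≥ q(S_{n,k}^+)` then `e(G) ≥ kn - k² + 1`. -/
theorem edge_lower_bound (n k : ℕ) (hk : 2 ≤ k) (hn : 400 * k ^ 2 ≤ n)
    (G : SimpleGraph (Fin n)) (hq : qIndex (SnkPlus n k) ≤ qIndex G) :
    k * n - k ^ 2 + 1 ≤ G.edgeFinset.card := by
  classical
  have hkn : k ≤ n := by nlinarith
  have hn2 : 2 ≤ n := by nlinarith
  have hn0 : 0 < n := by omega
  by_contra hcon
  push_neg at hcon
  have hm : G.edgeFinset.card ≤ k * n - k ^ 2 := by omega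
  have hk2 : (2:ℝ) ≤ (k:ℝ) := by exact_mod_cast hk
  have hnR : 400 * (k:ℝ)^2 ≤ (n:ℝ) := by exact_mod_cast hn
  have hknR : (k:ℝ) ≤ (n:ℝ) := by exact_mod_cast hkn
  have hn1 : (0:ℝ) < (n:ℝ) - 1 := by nlinarith
  set a : ℝ := (n:ℝ) + (k:ℝ) - 2 with ha
  have ha0 : 0 < a := by rw [ha]; nlinarith
  have hb0 : (0:ℝ) < (k:ℝ) := by linarith
  set x : Fin n → ℝ := fun i => if (i:ℕ) < k then a else (k:ℝ) with hxdef
  have hxval : ∀ u : Fin n, x u = if (u:ℕ) < k then a else (k:ℝ) := fun u => rfl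
  have hx0 : ∀ i, 0 < x i := by
    intro i; rw [hxval i]; split
    · exact ha0
    · exact hb0
  haveI : Nonempty (Fin n) := ⟨⟨0, hn0⟩⟩
  have hx : x ≠ 0 := by
    intro h0
    have h1 := hx0 ⟨0, hn0⟩
    rw [h0] at h1
    exact lt_irrefl 0 h1
  set T : ℝ := (k:ℝ) * a + ((n:ℝ) - (k:ℝ)) * (k:ℝ) with hT
  have hTsum : ∑ u, x u = T := by
    rw [hT, ← sum_if_const hkn a (k:ℝ)]
  set H := SnkPlus n k with hH
  have hsub1 : ∀ u : Fin n, (u:ℕ) < k → Finset.univ.erase u ⊆ H.neighborFinset u := by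
    intro u hu z hz
    rw [SimpleGraph.mem_neighborFinset]
    exact ⟨(Finset.mem_erase.1 hz).1.symm, Or.inl hu⟩
  have hdeg1 : ∀ u : Fin n, (u:ℕ) < k → ((n:ℝ) - 1) ≤ (H.degree u : ℝ) := by
    intro u hu
    have h1 : n - 1 ≤ H.degree u := by
      have h2 := Finset.card_le_card (hsub1 u hu)
      rwa [Finset.card_erase_of_mem (Finset.mem_univ u), Finset.card_univ, Fintype.card_fin] at h2
    calc ((n:ℝ) - 1) = ((n - 1 : ℕ) : ℝ) := by
          push_cast [Nat.cast_sub (show 1 ≤ n by omega)]; ring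
      _ ≤ _ := by exact_mod_cast h1
  have hsub2 : ∀ u : Fin n, k ≤ (u:ℕ) →
      (Finset.univ.filter (fun i : Fin n => (i:ℕ) < k)) ⊆ H.neighborFinset u := by
    intro u hu z hz
    rw [SimpleGraph.mem_neighborFinset]
    have hzk : (z:ℕ) < k := (Finset.mem_filter.1 hz).2
    have hne : u ≠ z := fun h => by rw [h] at hu; omega
    exact ⟨hne, Or.inr (Or.inl hzk)⟩
  have hdeg2 : ∀ u : Fin n, k ≤ (u:ℕ) → ((k:ℝ)) ≤ (H.degree u : ℝ) := by
    intro u hu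
    have h1 : k ≤ H.degree u := by
      have h2 := Finset.card_le_card (hsub2 u hu)
      rwa [Kcard hkn] at h2
    exact_mod_cast h1
  have hNsum1 : ∀ u : Fin n, (u:ℕ) < k → T - a ≤ ∑ z ∈ H.neighborFinset u, x z := by
    intro u hu
    have h1 : ∑ z ∈ Finset.univ.erase u, x z ≤ ∑ z ∈ H.neighborFinset u, x z :=
      Finset.sum_le_sum_of_subset_of_nonneg (hsub1 u hu) (fun z _ _ => (hx0 z).le)
    have h2 : ∑ z ∈ Finset.univ.erase u, x z = T - x u := by
      rw [Finset.sum_erase_eq_sub (Finset.mem_univ u), hTsum]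
    have h3 : x u = a := by rw [hxval u, if_pos hu]
    rw [h2, h3] at h1
    exact h1
  have hNsum2 : ∀ u : Fin n, k ≤ (u:ℕ) → (k:ℝ) * a ≤ ∑ z ∈ H.neighborFinset u, x z := by
    intro u hu
    have h1 : ∑ z ∈ (Finset.univ.filter fun i : Fin n => (i:ℕ) < k), x z
        ≤ ∑ z ∈ H.neighborFinset u, x z :=
      Finset.sum_le_sum_of_subset_of_nonneg (hsub2 u hu) (fun z _ _ => (hx0 z).le)
    have h2 : ∑ z ∈ (Finset.univ.filter fun i : Fin n => (i:ℕ) < k), x z = (k:ℝ) * a := by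
      rw [Finset.sum_congr rfl
        (fun z hz => by rw [hxval z, if_pos (Finset.mem_filter.1 hz).2]),
        Finset.sum_const, Kcard hkn, nsmul_eq_mul]
    linarith
  have hform : x ⬝ᵥ (signlessLaplacian H).mulVec x
      = ∑ u, ((H.degree u : ℝ) * (x u * x u) + x u * ∑ z ∈ H.neighborFinset u, x z) := by
    simp only [signlessLaplacian, Matrix.add_mulVec, dotProduct, Pi.add_apply,
      Matrix.mulVec_diagonal, SimpleGraph.adjMatrix_mulVec_apply]
    exact Finset.sum_congr rfl fun u _ => by ring
  have hTa : 0 ≤ T - a := by rw [hT, ha]; nlinarith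
  have hlower : (k:ℝ) * (((n:ℝ)-1)*(a*a) + a*(T-a))
        + ((n:ℝ)-(k:ℝ)) * ((k:ℝ)*((k:ℝ)*(k:ℝ)) + (k:ℝ)*((k:ℝ)*a))
      ≤ x ⬝ᵥ (signlessLaplacian H).mulVec x := by
    rw [hform, ← sum_if_const hkn (((n:ℝ)-1)*(a*a) + a*(T-a)) ((k:ℝ)*((k:ℝ)*(k:ℝ)) + (k:ℝ)*((k:ℝ)*a))]
    refine Finset.sum_le_sum fun u _ => ?_
    by_cases hu : (u:ℕ) < k
    · rw [if_pos hu]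
      have hxu : x u = a := by rw [hxval u, if_pos hu]
      have h1 := hdeg1 u hu
      have h2 := hNsum1 u hu
      rw [hxu]
      have e1 : ((n:ℝ)-1)*(a*a) ≤ (H.degree u:ℝ)*(a*a) :=
        mul_le_mul_of_nonneg_right h1 (by positivity)
      have e2 : a*(T-a) ≤ a*(∑ z ∈ H.neighborFinset u, x z) :=
        mul_le_mul_of_nonneg_left h2 ha0.le
      linarith
    · rw [if_neg hu]
      push_neg at hu
      have hxu : x u = (k:ℝ) := by rw [hxval u, if_neg (by omega)]
      have h1 := hdeg2 u hu
      have h2 := hNsum2 u hu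
      rw [hxu]
      have e1 : (k:ℝ)*((k:ℝ)*(k:ℝ)) ≤ (H.degree u:ℝ)*((k:ℝ)*(k:ℝ)) :=
        mul_le_mul_of_nonneg_right h1 (by positivity)
      have e2 : (k:ℝ)*((k:ℝ)*a) ≤ (k:ℝ)*(∑ z ∈ H.neighborFinset u, x z) :=
        mul_le_mul_of_nonneg_left h2 hb0.le
      linarith
  set D : ℝ := (k:ℝ)*(a*a) + ((n:ℝ)-(k:ℝ))*((k:ℝ)*(k:ℝ)) with hD
  have hDx : x ⬝ᵥ x = D := by
    rw [hD, ← sum_if_const hkn (a*a) ((k:ℝ)*(k:ℝ))]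
    simp only [dotProduct]
    refine Finset.sum_congr rfl fun u _ => ?_
    rw [hxval u]
    split <;> ring
  have hD0 : (0:ℝ) ≤ D := by
    rw [hD]
    nlinarith [mul_pos ha0 ha0, mul_pos hb0 hb0]
  have hray := rayleigh_le_sSup_spectrum (signlessLaplacian_isHermitian H) x
  have hchain : (k:ℝ) * (((n:ℝ)-1)*(a*a) + a*(T-a))
        + ((n:ℝ)-(k:ℝ)) * ((k:ℝ)*((k:ℝ)*(k:ℝ)) + (k:ℝ)*((k:ℝ)*a)) ≤ qIndex G * D := by
    calc (k:ℝ) * (((n:ℝ)-1)*(a*a) + a*(T-a)) + ((n:ℝ)-(k:ℝ)) * ((k:ℝ)*((k:ℝ)*(k:ℝ)) + (k:ℝ)*((k:ℝ)*a))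
        ≤ x ⬝ᵥ (signlessLaplacian H).mulVec x := hlower
      _ ≤ qIndex H * (x ⬝ᵥ x) := by rw [qIndex]; exact hray
      _ = qIndex H * D := by rw [hDx]
      _ ≤ qIndex G * D := mul_le_mul_of_nonneg_right hq hD0
  have hmR : (G.edgeFinset.card : ℝ) ≤ (k:ℝ)*(n:ℝ) - (k:ℝ)^2 := by
    have hk2n : k^2 ≤ k*n := by nlinarith
    have h1 : ((G.edgeFinset.card : ℕ) : ℝ) ≤ ((k*n - k^2 : ℕ) : ℝ) := by exact_mod_cast hm
    push_cast [Nat.cast_sub hk2n] at h1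
    linarith
  have hqG : qIndex G ≤ (n:ℝ) - 2 + 2*((k:ℝ)*(n:ℝ) - (k:ℝ)^2)/((n:ℝ)-1) := by
    refine le_trans (qIndex_le_das hn2 G) ?_
    have h1 : 2*(G.edgeFinset.card:ℝ)/((n:ℝ)-1) ≤ 2*((k:ℝ)*(n:ℝ)-(k:ℝ)^2)/((n:ℝ)-1) := by
      gcongr
    linarith
  have hfinal : (k:ℝ) * (((n:ℝ)-1)*(a*a) + a*(T-a))
        + ((n:ℝ)-(k:ℝ)) * ((k:ℝ)*((k:ℝ)*(k:ℝ)) + (k:ℝ)*((k:ℝ)*a))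
      ≤ ((n:ℝ) - 2 + 2*((k:ℝ)*(n:ℝ) - (k:ℝ)^2)/((n:ℝ)-1)) * D :=
    le_trans hchain (mul_le_mul_of_nonneg_right hqG hD0)
  have h9 : ((k:ℝ) * (((n:ℝ)-1)*(a*a) + a*(T-a))
        + ((n:ℝ)-(k:ℝ)) * ((k:ℝ)*((k:ℝ)*(k:ℝ)) + (k:ℝ)*((k:ℝ)*a))) * ((n:ℝ)-1)
      ≤ (((n:ℝ)-2)*((n:ℝ)-1) + 2*((k:ℝ)*(n:ℝ)-(k:ℝ)^2)) * D := by
    calc ((k:ℝ) * (((n:ℝ)-1)*(a*a) + a*(T-a))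
        + ((n:ℝ)-(k:ℝ)) * ((k:ℝ)*((k:ℝ)*(k:ℝ)) + (k:ℝ)*((k:ℝ)*a))) * ((n:ℝ)-1)
        ≤ (((n:ℝ) - 2 + 2*((k:ℝ)*(n:ℝ) - (k:ℝ)^2)/((n:ℝ)-1)) * D) * ((n:ℝ)-1) :=
          mul_le_mul_of_nonneg_right hfinal hn1.le
      _ = (((n:ℝ)-2)*((n:ℝ)-1) + 2*((k:ℝ)*(n:ℝ)-(k:ℝ)^2)) * D := by
          field_simp
  have hkey : ((k:ℝ) * (((n:ℝ)-1)*(a*a) + a*(T-a))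
        + ((n:ℝ)-(k:ℝ)) * ((k:ℝ)*((k:ℝ)*(k:ℝ)) + (k:ℝ)*((k:ℝ)*a))) * ((n:ℝ)-1)
      = (((n:ℝ)-2)*((n:ℝ)-1) + 2*((k:ℝ)*(n:ℝ)-(k:ℝ)^2)) * D
        + 2*(k:ℝ)^2*((k:ℝ)-1)*((2*(k:ℝ)-1)*(n:ℝ) - 3*(k:ℝ) + 2) := by
    rw [hD, hT, ha]
    ring
  have hpos : 0 < 2*(k:ℝ)^2*((k:ℝ)-1)*((2*(k:ℝ)-1)*(n:ℝ) - 3*(k:ℝ) + 2) := by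
    have h1 : (0:ℝ) < (k:ℝ) - 1 := by linarith
    have h2 : (0:ℝ) < (2*(k:ℝ)-1)*(n:ℝ) - 3*(k:ℝ) + 2 := by
      nlinarith [mul_le_mul_of_nonneg_left hknR (by linarith : (0:ℝ) ≤ 2*(k:ℝ)-1),
        sq_nonneg ((k:ℝ)-1)]
    have h3 : (0:ℝ) < 2*(k:ℝ)^2 := by positivity
    exact mul_pos (mul_pos h3 h1) h2
  linarith
end

section
/- Let G be a connected graph of order n ≥ 5 containing no path on 5 vertices. Then either G is a subgraph of S_{n,1}^+ (a star plus one edge), or G is obtained by joining the centers of two disjoint stars by an edge. -/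
open scoped Classical

lemma hasCopy_path5 {n : ℕ} {G : SimpleGraph (Fin n)} {v0 v1 v2 v3 v4 : Fin n}
    (h01 : G.Adj v0 v1) (h12 : G.Adj v1 v2) (h23 : G.Adj v2 v3) (h34 : G.Adj v3 v4)
    (h02 : v0 ≠ v2) (h03 : v0 ≠ v3) (h04 : v0 ≠ v4)
    (h13 : v1 ≠ v3) (h14 : v1 ≠ v4) (h24 : v2 ≠ v4) :
    HasCopy (SimpleGraph.pathGraph 5) G := by
  have n01 := h01.ne
  have n12 := h12.ne
  have n23 := h23.ne
  have n34 := h34.ne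
  have hinj : Function.Injective ![v0,v1,v2,v3,v4] := by
    intro a b hab
    fin_cases a <;> fin_cases b <;> simp_all
  refine ⟨⟨![v0,v1,v2,v3,v4], ?_⟩, hinj⟩
  intro a b hab
  rw [SimpleGraph.pathGraph_adj] at hab
  fin_cases a <;> fin_cases b <;> simp_all <;>
    first
      | exact h01 | exact h01.symm | exact h12 | exact h12.symm
      | exact h23 | exact h23.symm | exact h34 | exact h34.symm



lemma exists_boundary {V : Type*} {G : SimpleGraph V} (A : Set V) :
    ∀ {u v : V}, G.Walk u v → u ∈ A → v ∉ A → ∃ a b, a ∈ A ∧ b ∉ A ∧ G.Adj a b := by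
  intro u v p
  induction p with
  | nil => intro h1 h2; exact absurd h1 h2
  | @cons u x w h q ih =>
    intro h1 h2
    by_cases hx : x ∈ A
    · exact ih hx h2
    · exact ⟨u, x, h1, hx, h⟩

lemma exists_adj_of_walk {V : Type*} {G : SimpleGraph V} {u v : V}
    (hne : u ≠ v) (p : G.Walk u v) : ∃ x, G.Adj u x := by
  cases p with
  | nil => exact absurd rfl hne
  | cons h _ => exact ⟨_, h⟩

lemma exists_not_mem_of_card {n : ℕ} (S : Finset (Fin n)) (h : S.card < n) :
    ∃ z : Fin n, z ∉ S := by
  by_contra hc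
  push_neg at hc
  have : (Finset.univ : Finset (Fin n)) ⊆ S := fun z _ => hc z
  have := Finset.card_le_card this
  simp at this
  omega

lemma exists_p3 {n : ℕ} {G : SimpleGraph (Fin n)} (hconn : G.Connected) (hn : 3 ≤ n) :
    ∃ a b c : Fin n, a ≠ b ∧ b ≠ c ∧ a ≠ c ∧ G.Adj a b ∧ G.Adj b c := by
  set u0 : Fin n := ⟨0, by omega⟩
  set u1 : Fin n := ⟨1, by omega⟩
  have hne : u0 ≠ u1 := by simp [u0, u1, Fin.ext_iff]
  obtain ⟨p⟩ := hconn.preconnected u0 u1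
  obtain ⟨x, hx⟩ := exists_adj_of_walk hne p
  obtain ⟨w, hw⟩ := exists_not_mem_of_card {u0, x}
    (lt_of_le_of_lt (Finset.card_insert_le _ _) (by simp; omega))
  simp only [Finset.mem_insert, Finset.mem_singleton, not_or] at hw
  obtain ⟨p2⟩ := hconn.preconnected u0 w
  obtain ⟨a, b, ha, hb, hab⟩ := exists_boundary ({u0, x} : Set (Fin n)) p2
    (by simp) (by simp [hw.1, hw.2])
  simp only [Set.mem_insert_iff, Set.mem_singleton_iff, not_or] at ha hb
  rcases ha with rfl | rfl
  · exact ⟨x, u0, b, hx.ne', hab.ne, fun h => hb.2 h.symm, hx.symm, hab⟩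
  · exact ⟨u0, a, b, hx.ne, hab.ne, fun h => hb.1 h.symm, hx, hab⟩

lemma hasCopy_snkPlus  {n : ℕ} {G : SimpleGraph (Fin n)} (hn : 3 ≤ n) {c a b : Fin n}
    (hca : c ≠ a) (hcb : c ≠ b) (hab : a ≠ b)
    (h : ∀ x y, G.Adj x y → x = c ∨ y = c ∨ (x = a ∧ y = b) ∨ (x = b ∧ y = a)) :
    HasCopy G (SnkPlus n 1) := by
  set z0 : Fin n := ⟨0, by omega⟩ with hz0
  set z1 : Fin n := ⟨1, by omega⟩ with hz1
  set z2 : Fin n := ⟨2, by omega⟩ with hz2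
  set e1 : Equiv.Perm (Fin n) := Equiv.swap c z0 with he1
  have he1c : e1 c = z0 := Equiv.swap_apply_left _ _
  have ha1 : e1 a ≠ z0 := fun hh => hca (e1.injective (hh.trans he1c.symm)).symm
  set e2 : Equiv.Perm (Fin n) := Equiv.swap z1 (e1 a) with he2
  have he2a : e2 (e1 a) = z1 := Equiv.swap_apply_right _ _
  have hz01 : z0 ≠ z1 := by simp [hz0, hz1, Fin.ext_iff]
  have he2z0 : e2 z0 = z0 := Equiv.swap_apply_of_ne_of_ne hz01 (Ne.symm ha1)
  have hb2z0 : e2 (e1 b) ≠ z0 := by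
    intro hh
    have : e2 (e1 b) = e2 (e1 c) := by rw [hh, he1c, he2z0]
    exact hcb ((e1.injective (e2.injective this)).symm)
  have hb2z1 : e2 (e1 b) ≠ z1 := by
    intro hh
    have : e2 (e1 b) = e2 (e1 a) := by rw [hh, he2a]
    exact hab ((e1.injective (e2.injective this)).symm)
  set e3 : Equiv.Perm (Fin n) := Equiv.swap z2 (e2 (e1 b)) with he3
  have hz02 : z0 ≠ z2 := by simp [hz0, hz2, Fin.ext_iff]
  have hz12 : z1 ≠ z2 := by simp [hz1, hz2, Fin.ext_iff]
  have he3z0 : e3 z0 = z0 := Equiv.swap_apply_of_ne_of_ne hz02 hb2z0.symm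
  have he3z1 : e3 z1 = z1 := Equiv.swap_apply_of_ne_of_ne hz12 hb2z1.symm
  set e : Equiv.Perm (Fin n) := e1.trans (e2.trans e3) with he
  have hec : e c = z0 := by
    rw [he, Equiv.trans_apply, Equiv.trans_apply, he1c, he2z0, he3z0]
  have hea : e a = z1 := by
    rw [he, Equiv.trans_apply, Equiv.trans_apply, he2a, he3z1]
  have heb : e b = z2 := by
    rw [he, Equiv.trans_apply, Equiv.trans_apply]; exact Equiv.swap_apply_right _ _
  have hvc : ((e c : Fin n) : ℕ) = 0 := by rw [hec]
  have hva : ((e a : Fin n) : ℕ) = 1 := by rw [hea]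
  have hvb : ((e b : Fin n) : ℕ) = 2 := by rw [heb]
  refine ⟨⟨⇑e, ?_⟩, fun x y hxy => e.injective hxy⟩
  intro x y hxy
  have hne : e x ≠ e y := fun hh => hxy.ne (e.injective hh)
  refine ⟨hne, ?_⟩
  rcases h x y hxy with rfl | rfl | ⟨rfl, rfl⟩ | ⟨rfl, rfl⟩
  · left; omega
  · right; left; omega
  · right; right; exact ⟨by omega, by omega⟩
  · right; right; exact ⟨by omega, by omega⟩

lemma dl_inl_inl  {s t : ℕ} (a b : Fin (s*1+1)) :
    (DLgraph s t 1).Adj (Sum.inl a) (Sum.inl b) ↔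
      ((a:ℕ) ≠ (b:ℕ) ∧ ((a:ℕ) = 0 ∨ (b:ℕ) = 0)) := by
  show (a ≠ b ∧ ((a:ℕ) = 0 ∨ (b:ℕ) = 0 ∨ ((a:ℕ)-1)/1 = ((b:ℕ)-1)/1)) ↔ _
  rw [Ne, ← Fin.val_eq_val]
  omega

lemma dl_inr_inr {s t : ℕ} (a b : Fin (t*1+1)) :
    (DLgraph s t 1).Adj (Sum.inr a) (Sum.inr b) ↔
      ((a:ℕ) ≠ (b:ℕ) ∧ ((a:ℕ) = 0 ∨ (b:ℕ) = 0)) := by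
  show (a ≠ b ∧ ((a:ℕ) = 0 ∨ (b:ℕ) = 0 ∨ ((a:ℕ)-1)/1 = ((b:ℕ)-1)/1)) ↔ _
  rw [Ne, ← Fin.val_eq_val]
  omega

lemma dl_inl_inr {s t : ℕ} (a : Fin (s*1+1)) (b : Fin (t*1+1)) :
    (DLgraph s t 1).Adj (Sum.inl a) (Sum.inr b) ↔ ((a:ℕ) = 0 ∧ (b:ℕ) = 0) :=
  Iff.rfl

lemma dl_inr_inl {s t : ℕ} (a : Fin (t*1+1)) (b : Fin (s*1+1)) :
    (DLgraph s t 1).Adj (Sum.inr a) (Sum.inl b) ↔ ((a:ℕ) = 0 ∧ (b:ℕ) = 0) :=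
  Iff.rfl

lemma iso_dlgraph {n : ℕ} {G : SimpleGraph (Fin n)} {v1 v2 : Fin n}
    (h12 : G.Adj v1 v2)
    (hmeet : ∀ x y, G.Adj x y → x = v1 ∨ x = v2 ∨ y = v1 ∨ y = v2)
    (hnc : ∀ x, G.Adj v1 x → G.Adj v2 x → False)
    (hdom : ∀ x, x ≠ v1 → x ≠ v2 → G.Adj v1 x ∨ G.Adj v2 x) :
    ∃ s t, Nonempty (G ≃g DLgraph s t 1) := by
  classical
  have h21 := h12.symm
  have h12ne : v1 ≠ v2 := h12.ne
  set B := G.neighborFinset v1 \ {v2} with hBdef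
  set C := G.neighborFinset v2 \ {v1} with hCdef
  set s := B.card with hs
  set t := C.card with ht
  refine ⟨s, t, ?_⟩
  have hmemB : ∀ x, x ∈ B ↔ G.Adj v1 x ∧ x ≠ v2 := by
    intro x
    simp [hBdef, SimpleGraph.mem_neighborFinset, and_comm]
  have hmemC : ∀ x, x ∈ C ↔ G.Adj v2 x ∧ x ≠ v1 := by
    intro x
    simp [hCdef, SimpleGraph.mem_neighborFinset, and_comm]
  have hv1B : v1 ∉ B := fun h => G.loopless.irrefl v1 ((hmemB v1).mp h).1
  have hv2B : v2 ∉ B := fun h => ((hmemB v2).mp h).2 rfl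
  have hv1C : v1 ∉ C := fun h => ((hmemC v1).mp h).2 rfl
  have hv2C : v2 ∉ C := fun h => G.loopless.irrefl v2 ((hmemC v2).mp h).1
  have hBC : ∀ x, x ∈ B → x ∈ C → False := fun x hB hC =>
    hnc x ((hmemB x).mp hB).1 ((hmemC x).mp hC).1
  have hpart : ∀ x : Fin n, x = v1 ∨ x = v2 ∨ x ∈ B ∨ x ∈ C := by
    intro x
    by_cases h1 : x = v1
    · exact Or.inl h1
    by_cases h2 : x = v2
    · exact Or.inr (Or.inl h2)
    rcases hdom x h1 h2 with h | h
    · exact Or.inr (Or.inr (Or.inl ((hmemB x).mpr ⟨h, h2⟩)))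
    · exact Or.inr (Or.inr (Or.inr ((hmemC x).mpr ⟨h, h1⟩)))
  -- cardinality
  have hcard : n = s * 1 + 1 + (t * 1 + 1) := by
    have hdisjBC : Disjoint B C := Finset.disjoint_left.mpr (fun {x} hx hx' => hBC x hx hx')
    have huniv : (Finset.univ : Finset (Fin n)) = insert v1 (insert v2 (B ∪ C)) := by
      apply Finset.ext
      intro x
      simp only [Finset.mem_univ, true_iff, Finset.mem_insert, Finset.mem_union]
      rcases hpart x with h | h | h | h <;> tauto
    have h1 : v1 ∉ insert v2 (B ∪ C) := by
      simp only [Finset.mem_insert, Finset.mem_union]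
      push_neg
      exact ⟨h12ne, hv1B, hv1C⟩
    have h2 : v2 ∉ B ∪ C := by
      simp only [Finset.mem_union]
      push_neg
      exact ⟨hv2B, hv2C⟩
    have := Finset.card_univ (α := Fin n)
    rw [huniv, Finset.card_insert_of_notMem h1, Finset.card_insert_of_notMem h2,
      Finset.card_union_of_disjoint hdisjBC] at this
    simp only [Fintype.card_fin] at this
    omega
  -- the map
  have hslt : ∀ (x : Fin n) (hx : x ∈ B), ((B.equivFin ⟨x, hx⟩ : ℕ)) + 1 < s * 1 + 1 := by
    intro x hx
    have := (B.equivFin ⟨x, hx⟩).isLt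
    omega
  have htlt : ∀ (x : Fin n) (hx : x ∈ C), ((C.equivFin ⟨x, hx⟩ : ℕ)) + 1 < t * 1 + 1 := by
    intro x hx
    have := (C.equivFin ⟨x, hx⟩).isLt
    omega
  set f : Fin n → Fin (s*1+1) ⊕ Fin (t*1+1) := fun x =>
    if hx : x ∈ B then .inl ⟨(B.equivFin ⟨x, hx⟩ : ℕ) + 1, hslt x hx⟩
    else if hx' : x ∈ C then .inr ⟨(C.equivFin ⟨x, hx'⟩ : ℕ) + 1, htlt x hx'⟩
    else if x = v1 then .inl ⟨0, by omega⟩ else .inr ⟨0, by omega⟩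
    with hfdef
  have hfv1 : f v1 = Sum.inl ⟨0, by omega⟩ := by
    simp [hfdef, hv1B, hv1C]
  have hfv2 : f v2 = Sum.inr ⟨0, by omega⟩ := by
    simp only [hfdef, dif_neg hv2B, dif_neg hv2C, if_neg (Ne.symm h12ne)]
  have hfB : ∀ (x : Fin n) (hx : x ∈ B),
      f x = Sum.inl ⟨(B.equivFin ⟨x, hx⟩ : ℕ) + 1, hslt x hx⟩ := by
    intro x hx
    simp only [hfdef, dif_pos hx]
  have hfC : ∀ (x : Fin n) (hx : x ∈ C),
      f x = Sum.inr ⟨(C.equivFin ⟨x, hx⟩ : ℕ) + 1, htlt x hx⟩ := by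
    intro x hx
    have hxB : x ∉ B := fun h => hBC x h hx
    simp only [hfdef, dif_neg hxB, dif_pos hx]
  -- injectivity
  have hinj : Function.Injective f := by
    intro x y hxy
    rcases hpart x with rfl | rfl | hx | hx <;> rcases hpart y with rfl | rfl | hy | hy
    · rfl
    · rw [hfv1, hfv2] at hxy; exact absurd hxy (by simp)
    · rw [hfv1, hfB y hy] at hxy; simp only [Sum.inl.injEq, Fin.mk.injEq] at hxy; omega
    · rw [hfv1, hfC y hy] at hxy; exact absurd hxy (by simp)
    · rw [hfv2, hfv1] at hxy; exact absurd hxy (by simp)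
    · rfl
    · rw [hfv2, hfB y hy] at hxy; exact absurd hxy (by simp)
    · rw [hfv2, hfC y hy] at hxy; simp only [Sum.inr.injEq, Fin.mk.injEq] at hxy; omega
    · rw [hfB x hx, hfv1] at hxy; simp only [Sum.inl.injEq, Fin.mk.injEq] at hxy; omega
    · rw [hfB x hx, hfv2] at hxy; exact absurd hxy (by simp)
    · rw [hfB x hx, hfB y hy] at hxy
      simp only [Sum.inl.injEq, Fin.mk.injEq, Nat.add_right_cancel_iff] at hxy
      have := B.equivFin.injective (Fin.ext hxy)
      exact congrArg Subtype.val this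
    · rw [hfB x hx, hfC y hy] at hxy; exact absurd hxy (by simp)
    · rw [hfC x hx, hfv1] at hxy; exact absurd hxy (by simp)
    · rw [hfC x hx, hfv2] at hxy; simp only [Sum.inr.injEq, Fin.mk.injEq] at hxy; omega
    · rw [hfC x hx, hfB y hy] at hxy; exact absurd hxy (by simp)
    · rw [hfC x hx, hfC y hy] at hxy
      simp only [Sum.inr.injEq, Fin.mk.injEq, Nat.add_right_cancel_iff] at hxy
      have := C.equivFin.injective (Fin.ext hxy)
      exact congrArg Subtype.val this
  have hbij : Function.Bijective f := by
    rw [Fintype.bijective_iff_injective_and_card]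
    refine ⟨hinj, ?_⟩
    simp only [Fintype.card_fin, Fintype.card_sum]
    omega
  -- adjacency transfer
  have hBadj : ∀ (x : Fin n), x ∈ B → G.Adj v1 x := fun x hx => ((hmemB x).mp hx).1
  have hCadj : ∀ (x : Fin n), x ∈ C → G.Adj v2 x := fun x hx => ((hmemC x).mp hx).1
  have hfwd : ∀ x y, G.Adj x y → (DLgraph s t 1).Adj (f x) (f y) := by
    have key1 : ∀ y, G.Adj v1 y → (DLgraph s t 1).Adj (f v1) (f y) := by
      intro y hy
      by_cases hy2 : y = v2
      · subst hy2; rw [hfv1, hfv2, dl_inl_inr]; exact ⟨rfl, rfl⟩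
      · have hyB : y ∈ B := (hmemB y).mpr ⟨hy, hy2⟩
        rw [hfv1, hfB y hyB, dl_inl_inl]
        simp
    have key2 : ∀ y, G.Adj v2 y → (DLgraph s t 1).Adj (f v2) (f y) := by
      intro y hy
      by_cases hy1 : y = v1
      · subst hy1; rw [hfv2, hfv1, dl_inr_inl]; exact ⟨rfl, rfl⟩
      · have hyC : y ∈ C := (hmemC y).mpr ⟨hy, hy1⟩
        rw [hfv2, hfC y hyC, dl_inr_inr]
        simp
    intro x y hxy
    rcases hmeet x y hxy with rfl | rfl | rfl | rfl
    · exact key1 y hxy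
    · exact key2 y hxy
    · exact ((DLgraph s t 1).adj_symm (key1 x hxy.symm))
    · exact ((DLgraph s t 1).adj_symm (key2 x hxy.symm))
  have hbwd : ∀ x y, (DLgraph s t 1).Adj (f x) (f y) → G.Adj x y := by
    intro x y h
    rcases hpart x with rfl | rfl | hx | hx <;> rcases hpart y with rfl | rfl | hy | hy
    · rw [hfv1] at h; rw [dl_inl_inl] at h; simp at h
    · exact h12
    · exact hBadj y hy
    · rw [hfv1, hfC y hy, dl_inl_inr] at h; simp at h
    · exact h21
    · rw [hfv2] at h; rw [dl_inr_inr] at h; simp at h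
    · rw [hfv2, hfB y hy, dl_inr_inl] at h; simp at h
    · exact hCadj y hy
    · exact (hBadj x hx).symm
    · rw [hfB x hx, hfv2, dl_inl_inr] at h; simp at h
    · rw [hfB x hx, hfB y hy, dl_inl_inl] at h; simp at h
    · rw [hfB x hx, hfC y hy, dl_inl_inr] at h; simp at h
    · rw [hfC x hx, hfv1, dl_inr_inl] at h; simp at h
    · exact (hCadj x hx).symm
    · rw [hfC x hx, hfB y hy, dl_inr_inl] at h; simp at h
    · rw [hfC x hx, hfC y hy, dl_inr_inr] at h; simp at h
  exact ⟨⟨Equiv.ofBijective f hbij, fun {x y} => ⟨hbwd x y, hfwd x y⟩⟩⟩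

section AuxTri
variable {n : ℕ} {G : SimpleGraph (Fin n)}

lemma exists_outside  (hn : 5 ≤ n) (a b c d : Fin n) :
    ∃ x : Fin n, x ≠ a ∧ x ≠ b ∧ x ≠ c ∧ x ≠ d := by
  have h4 : ({a,b,c,d} : Finset (Fin n)).card ≤ 4 := by
    have h2 : ({c,d} : Finset (Fin n)).card ≤ 2 :=
      le_trans (Finset.card_insert_le _ _) (by simp)
    have h3 : ({b,c,d} : Finset (Fin n)).card ≤ 3 := by
      have := Finset.card_insert_le b ({c,d} : Finset (Fin n))
      omega
    have := Finset.card_insert_le a ({b,c,d} : Finset (Fin n))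
    omega
  obtain ⟨z, hz⟩ := exists_not_mem_of_card {a,b,c,d} (by omega)
  simp only [Finset.mem_insert, Finset.mem_singleton, not_or] at hz
  exact ⟨z, hz.1, hz.2.1, hz.2.2.1, hz.2.2.2⟩

lemma not_adj_ad (hn : 5 ≤ n)
    (noP5 : ∀ v0 v1 v2 v3 v4 : Fin n, G.Adj v0 v1 → G.Adj v1 v2 → G.Adj v2 v3 → G.Adj v3 v4 →
      v0 ≠ v2 → v0 ≠ v3 → v0 ≠ v4 → v1 ≠ v3 → v1 ≠ v4 → v2 ≠ v4 → False)
    {a b c d : Fin n}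
    (hab : G.Adj a b) (hbc : G.Adj b c) (hcd : G.Adj c d)
    (hac : a ≠ c) (had : a ≠ d) (hbd : b ≠ d)
    (hA : ∀ x, x = a ∨ x = b ∨ x = c ∨ x = d ∨ G.Adj b x ∨ G.Adj c x) :
    ¬ G.Adj a d := by
  intro had'
  obtain ⟨x0, hxa, hxb, hxc, hxd⟩ := exists_outside hn a b c d
  rcases hA x0 with rfl | rfl | rfl | rfl | h | h
  · exact hxa rfl
  · exact hxb rfl
  · exact hxc rfl
  · exact hxd rfl
  · exact noP5 x0 b a d c h.symm hab.symm had' hcd.symm hxa hxd hxc hbd hbc.ne hac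
  · exact noP5 x0 c d a b h.symm hcd had'.symm hab hxd hxa hxb hac.symm hbc.ne' hbd.symm

lemma tri_case (hn : 5 ≤ n)
    (noP5 : ∀ v0 v1 v2 v3 v4 : Fin n, G.Adj v0 v1 → G.Adj v1 v2 → G.Adj v2 v3 → G.Adj v3 v4 →
      v0 ≠ v2 → v0 ≠ v3 → v0 ≠ v4 → v1 ≠ v3 → v1 ≠ v4 → v2 ≠ v4 → False)
    {a b c d : Fin n}
    (hab : G.Adj a b) (hbc : G.Adj b c) (hcd : G.Adj c d)
    (hac : a ≠ c) (had : a ≠ d) (hbd : b ≠ d)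
    (hA : ∀ x, x = a ∨ x = b ∨ x = c ∨ x = d ∨ G.Adj b x ∨ G.Adj c x)
    (htri : G.Adj a c) :
    ∀ x y, G.Adj x y → x = c ∨ y = c ∨ (x = a ∧ y = b) ∨ (x = b ∧ y = a) := by
  have hnotad : ¬ G.Adj a d := not_adj_ad hn noP5 hab hbc hcd hac had hbd hA
  obtain ⟨x0, hxa, hxb, hxc, hxd⟩ := exists_outside hn a b c d
  have hnbd : ¬ G.Adj b d := by
    intro hbd'
    rcases hA x0 with rfl | rfl | rfl | rfl | h | h
    · exact hxa rfl
    · exact hxb rfl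
    · exact hxc rfl
    · exact hxd rfl
    · exact noP5 x0 b d c a h.symm hbd' hcd.symm htri.symm hxd hxc hxa hbc.ne hab.ne'
        had.symm
    · exact noP5 x0 c a b d h.symm htri.symm hab hbd' hxa hxb hxd hbc.ne' hcd.ne had
  -- neighbors of a are within {b, c}
  have hOa : ∀ y, G.Adj a y → y = b ∨ y = c := by
    intro y hy
    by_cases h1 : y = b
    · exact Or.inl h1
    by_cases h2 : y = c
    · exact Or.inr h2
    by_cases h3 : y = d
    · exact absurd (h3 ▸ hy) hnotad
    have h0 : y ≠ a := hy.ne'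
    exact (noP5 y a b c d hy.symm hab hbc hcd h1 h2 h3 hac had hbd).elim
  -- neighbors of b are within {a, c}
  have hOb : ∀ y, G.Adj b y → y = a ∨ y = c := by
    intro y hy
    by_cases h1 : y = a
    · exact Or.inl h1
    by_cases h2 : y = c
    · exact Or.inr h2
    by_cases h3 : y = d
    · exact absurd (h3 ▸ hy) hnbd
    exact (noP5 y b a c d hy.symm hab.symm htri hcd h1 h2 h3 hbc.ne hbd had).elim
  -- neighbors of d are within {c}
  have hOd : ∀ y, G.Adj d y → y = c := by
    intro y hy
    by_cases h2 : y = c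
    · exact h2
    by_cases h1 : y = a
    · exact absurd (h1 ▸ hy).symm hnotad
    by_cases h3 : y = b
    · exact absurd (h3 ▸ hy).symm hnbd
    exact (noP5 y d c b a hy.symm hcd.symm hbc.symm hab.symm h2 h3 h1 hbd.symm had.symm hac.symm).elim
  -- outside vertices adjacent only to c
  have hOout : ∀ x, x ≠ a → x ≠ b → x ≠ c → x ≠ d → ∀ y, G.Adj x y → y = c := by
    intro x h1 h2 h3 h4 y hy
    have hcx : G.Adj c x := by
      rcases hA x with rfl | rfl | rfl | rfl | h | h
      · exact absurd rfl h1
      · exact absurd rfl h2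
      · exact absurd rfl h3
      · exact absurd rfl h4
      · rcases hOb x h with rfl | rfl
        · exact absurd rfl h1
        · exact absurd rfl h3
      · exact h
    by_cases hyc : y = c
    · exact hyc
    exfalso
    by_cases hya : y = a
    · subst hya; rcases hOa x hy.symm with rfl | rfl
      · exact h2 rfl
      · exact h3 rfl
    by_cases hyb : y = b
    · subst hyb; rcases hOb x hy.symm with rfl | rfl
      · exact h1 rfl
      · exact h3 rfl
    by_cases hyd : y = d
    · subst hyd; exact h3 (hOd x hy.symm)
    -- y outside as well
    exact noP5 y x c a b hy.symm hcx.symm htri.symm hab hyc hya hyb h1 h2 hbc.ne'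
  intro x y hxy
  by_cases hxc : x = c
  · exact Or.inl hxc
  by_cases hyc : y = c
  · exact Or.inr (Or.inl hyc)
  by_cases hxa : x = a
  · subst hxa
    rcases hOa y hxy with rfl | rfl
    · exact Or.inr (Or.inr (Or.inl ⟨rfl, rfl⟩))
    · exact absurd rfl hyc
  by_cases hxb : x = b
  · subst hxb
    rcases hOb y hxy with rfl | rfl
    · exact Or.inr (Or.inr (Or.inr ⟨rfl, rfl⟩))
    · exact absurd rfl hyc
  by_cases hxd : x = d
  · subst hxd; exact absurd (hOd y hxy) hyc
  · exact absurd (hOout x hxa hxb hxc hxd y hxy) hyc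

end AuxTri

/-- A connected `P_5`-free graph of order `n ≥ 5` is a subgraph of `S_{n,1}^+`, or
is obtained by joining the centers of two disjoint stars by an edge. -/

theorem p5_free_structure (n : ℕ) (hn : 5 ≤ n) (G : SimpleGraph (Fin n))
    (hconn : G.Connected)
    (hfree : ¬ HasCopy (SimpleGraph.pathGraph 5) G) :
    HasCopy G (SnkPlus n 1) ∨ ∃ s t, Nonempty (G ≃g DLgraph s t 1) := by
  classical
  have noP5 : ∀ v0 v1 v2 v3 v4 : Fin n, G.Adj v0 v1 → G.Adj v1 v2 → G.Adj v2 v3 →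
      G.Adj v3 v4 → v0 ≠ v2 → v0 ≠ v3 → v0 ≠ v4 → v1 ≠ v3 → v1 ≠ v4 → v2 ≠ v4 → False := by
    intro v0 v1 v2 v3 v4 h01 h12 h23 h34 h02 h03 h04 h13 h14 h24
    exact hfree (hasCopy_path5 h01 h12 h23 h34 h02 h03 h04 h13 h14 h24)
  by_cases hP4 : ∃ p q r s : Fin n, G.Adj p q ∧ G.Adj q r ∧ G.Adj r s ∧ p ≠ r ∧ p ≠ s ∧ q ≠ s
  · obtain ⟨a, b, c, d, hab, hbc, hcd, hac, had, hbd⟩ := hP4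
    -- every vertex is on the path or adjacent to b or c
    have hA : ∀ x : Fin n, x = a ∨ x = b ∨ x = c ∨ x = d ∨ G.Adj b x ∨ G.Adj c x := by
      by_contra hcon
      push_neg at hcon
      obtain ⟨w0, hw1, hw2, hw3, hw4, hw5, hw6⟩ := hcon
      have haA : a ∈ {x : Fin n | x = a ∨ x = b ∨ x = c ∨ x = d ∨ G.Adj b x ∨ G.Adj c x} :=
        Or.inl rfl
      have hwA : w0 ∉ {x : Fin n | x = a ∨ x = b ∨ x = c ∨ x = d ∨ G.Adj b x ∨ G.Adj c x} := by
        intro h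
        rcases h with h | h | h | h | h | h
        exacts [hw1 h, hw2 h, hw3 h, hw4 h, hw5 h, hw6 h]
      obtain ⟨p⟩ := hconn.preconnected a w0
      obtain ⟨u, w, hu, hw, huw⟩ := exists_boundary _ p haA hwA
      have hw' : w ≠ a ∧ w ≠ b ∧ w ≠ c ∧ w ≠ d ∧ ¬ G.Adj b w ∧ ¬ G.Adj c w := by
        constructor
        · intro h; exact hw (Or.inl h)
        constructor
        · intro h; exact hw (Or.inr (Or.inl h))
        constructor
        · intro h; exact hw (Or.inr (Or.inr (Or.inl h)))
        constructor
        · intro h; exact hw (Or.inr (Or.inr (Or.inr (Or.inl h))))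
        constructor
        · intro h; exact hw (Or.inr (Or.inr (Or.inr (Or.inr (Or.inl h)))))
        · intro h; exact hw (Or.inr (Or.inr (Or.inr (Or.inr (Or.inr h)))))
      obtain ⟨hwa, hwb, hwc, hwd, hwAb, hwAc⟩ := hw'
      simp only [Set.mem_setOf_eq] at hu
      rcases hu with rfl | rfl | rfl | rfl | hbu | hcu
      · exact noP5 w u b c d huw.symm hab hbc hcd hwb hwc hwd hac had hbd
      · exact hwAb huw
      · exact hwAc huw
      · exact noP5 w u c b a huw.symm hcd.symm hbc.symm hab.symm hwc hwb hwa hbd.symm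
          had.symm hac.symm
      · by_cases huc : u = c
        · exact hwAc (huc ▸ huw)
        by_cases hud : u = d
        · subst hud
          exact noP5 w u c b a huw.symm hcd.symm hbc.symm hab.symm hwc hwb hwa hbd.symm
            had.symm hac.symm
        · exact noP5 w u b c d huw.symm hbu.symm hbc hcd hwb hwc hwd huc hud hbd
      · by_cases hub : u = b
        · exact hwAb (hub ▸ huw)
        by_cases hua : u = a
        · subst hua
          exact noP5 w u b c d huw.symm hab hbc hcd hwb hwc hwd hac had hbd
        · exact noP5 w u c b a huw.symm hcu.symm hbc.symm hab.symm hwc hwb hwa hub hua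
            hac.symm
    by_cases htri1 : G.Adj a c
    · exact Or.inl (hasCopy_snkPlus (by omega) hac.symm hbc.ne' hab.ne
        (tri_case hn noP5 hab hbc hcd hac had hbd hA htri1))
    by_cases htri2 : G.Adj b d
    · -- reversed path d c b a
      have hA' : ∀ x : Fin n, x = d ∨ x = c ∨ x = b ∨ x = a ∨ G.Adj c x ∨ G.Adj b x := by
        intro x; rcases hA x with h | h | h | h | h | h <;> tauto
      exact Or.inl (hasCopy_snkPlus (by omega) hbd hbc.ne hcd.ne'
        (tri_case hn noP5 hcd.symm hbc.symm hab.symm hbd.symm had.symm hac.symm hA'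
          htri2.symm))
    · -- double star with centers b, c
      have hnotad : ¬ G.Adj a d := not_adj_ad hn noP5 hab hbc hcd hac had hbd hA
      have hOa : ∀ x, x ≠ b → x ≠ c → x ≠ d → ¬ G.Adj a x := by
        intro x h1 h2 h3 hx
        by_cases h0 : x = a
        · exact G.loopless.irrefl a (h0 ▸ hx)
        exact noP5 x a b c d hx.symm hab hbc hcd h1 h2 h3 hac had hbd
      have hOd : ∀ x, x ≠ a → x ≠ b → x ≠ c → ¬ G.Adj d x := by
        intro x h1 h2 h3 hx
        by_cases h0 : x = d
        · exact G.loopless.irrefl d (h0 ▸ hx)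
        exact noP5 x d c b a hx.symm hcd.symm hbc.symm hab.symm h3 h2 h1 hbd.symm had.symm
          hac.symm
      have hOO : ∀ x y, x ≠ a → x ≠ b → x ≠ c → x ≠ d → y ≠ a → y ≠ b → y ≠ c → y ≠ d →
          ¬ G.Adj x y := by
        intro x y h1 h2 h3 h4 g1 g2 g3 g4 hxy
        rcases hA x with rfl | rfl | rfl | rfl | h | h
        · exact h1 rfl
        · exact h2 rfl
        · exact h3 rfl
        · exact h4 rfl
        · exact noP5 y x b c d hxy.symm h.symm hbc hcd g2 g3 g4 h3 h4 hbd
        · exact noP5 y x c b a hxy.symm h.symm hbc.symm hab.symm g3 g2 g1 h2 h1 hac.symm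
      have hmeet : ∀ x y, G.Adj x y → x = b ∨ x = c ∨ y = b ∨ y = c := by
        intro x y hxy
        by_cases hxb : x = b
        · exact Or.inl hxb
        by_cases hxc : x = c
        · exact Or.inr (Or.inl hxc)
        by_cases hyb : y = b
        · exact Or.inr (Or.inr (Or.inl hyb))
        by_cases hyc : y = c
        · exact Or.inr (Or.inr (Or.inr hyc))
        exfalso
        by_cases hxa : x = a
        · subst hxa
          by_cases hyd : y = d
          · exact hnotad (hyd ▸ hxy)
          · exact hOa y hyb hyc hyd hxy
        by_cases hxd : x = d
        · subst hxd
          by_cases hya : y = a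
          · exact hnotad (hya ▸ hxy).symm
          · exact hOd y hya hyb hyc hxy
        by_cases hya : y = a
        · subst hya; exact hOa x hxb hxc hxd hxy.symm
        by_cases hyd : y = d
        · subst hyd; exact hOd x hxa hxb hxc hxy.symm
        · exact hOO x y hxa hxb hxc hxd hya hyb hyc hyd hxy
      have hnc : ∀ x, G.Adj b x → G.Adj c x → False := by
        intro x h1 h2
        by_cases hxa : x = a
        · exact htri1 (hxa ▸ h2).symm
        by_cases hxd : x = d
        · exact htri2 (hxd ▸ h1)
        by_cases hxb : x = b
        · exact G.loopless.irrefl b (hxb ▸ h1)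
        by_cases hxc : x = c
        · exact G.loopless.irrefl c (hxc ▸ h2)
        · exact noP5 a b x c d hab h1 h2.symm hcd (Ne.symm hxa) hac had hbc.ne hbd hxd
      have hdom : ∀ x, x ≠ b → x ≠ c → G.Adj b x ∨ G.Adj c x := by
        intro x h1 h2
        rcases hA x with rfl | rfl | rfl | rfl | h | h
        · exact Or.inl hab.symm
        · exact absurd rfl h1
        · exact absurd rfl h2
        · exact Or.inr hcd
        · exact Or.inl h
        · exact Or.inr h
      exact Or.inr (iso_dlgraph hbc hmeet hnc hdom)
  · -- no P4 : star case
    have noP4 : ∀ p q r s : Fin n, G.Adj p q → G.Adj q r → G.Adj r s → p ≠ r → p ≠ s →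
        q ≠ s → False := by
      intro p q r s h1 h2 h3 h4 h5 h6
      exact hP4 ⟨p, q, r, s, h1, h2, h3, h4, h5, h6⟩
    obtain ⟨a, b, c, hab', hbc', hac', hAb, hBc⟩ := exists_p3 hconn (by omega)
    -- hAb : G.Adj a b, hBc : G.Adj b c
    have hA2 : ∀ x : Fin n, x = a ∨ x = b ∨ x = c ∨ G.Adj b x := by
      by_contra hcon
      push_neg at hcon
      obtain ⟨w0, hw1, hw2, hw3, hw4⟩ := hcon
      have hbA : b ∈ {x : Fin n | x = a ∨ x = b ∨ x = c ∨ G.Adj b x} := Or.inr (Or.inl rfl)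
      have hwA : w0 ∉ {x : Fin n | x = a ∨ x = b ∨ x = c ∨ G.Adj b x} := by
        intro h
        rcases h with h | h | h | h
        exacts [hw1 h, hw2 h, hw3 h, hw4 h]
      obtain ⟨p⟩ := hconn.preconnected b w0
      obtain ⟨u, w, hu, hw, huw⟩ := exists_boundary _ p hbA hwA
      have hwa : w ≠ a := fun h => hw (Or.inl h)
      have hwb : w ≠ b := fun h => hw (Or.inr (Or.inl h))
      have hwc : w ≠ c := fun h => hw (Or.inr (Or.inr (Or.inl h)))
      have hwAb : ¬ G.Adj b w := fun h => hw (Or.inr (Or.inr (Or.inr h)))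
      simp only [Set.mem_setOf_eq] at hu
      rcases hu with rfl | rfl | rfl | hbu
      · exact noP4 w u b c huw.symm hAb hBc hwb hwc hac'
      · exact hwAb huw
      · exact noP4 w u b a huw.symm hBc.symm hAb.symm hwb hwa (Ne.symm hac')
      · by_cases hua : u = a
        · subst hua; exact noP4 w u b c huw.symm hAb hBc hwb hwc hac'
        by_cases huc : u = c
        · subst huc; exact noP4 w u b a huw.symm hBc.symm hAb.symm hwb hwa (Ne.symm hac')
        · exact noP4 w u b a huw.symm hbu.symm hAb.symm hwb hwa hua
    -- every edge is incident to b
    have hmeetb : ∀ x y, G.Adj x y → x = b ∨ y = b := by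
      intro x y hxy
      by_cases hxb : x = b
      · exact Or.inl hxb
      by_cases hyb : y = b
      · exact Or.inr hyb
      exfalso
      have hbx : G.Adj b x := by
        rcases hA2 x with rfl | rfl | rfl | h
        · exact hAb.symm
        · exact absurd rfl hxb
        · exact hBc
        · exact h
      obtain ⟨z, hz⟩ := exists_not_mem_of_card {x, y, b} (by
        have h2 : ({y, b} : Finset (Fin n)).card ≤ 2 :=
          le_trans (Finset.card_insert_le _ _) (by simp)
        have := Finset.card_insert_le x ({y, b} : Finset (Fin n))
        omega)
      simp only [Finset.mem_insert, Finset.mem_singleton, not_or] at hz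
      obtain ⟨hzx, hzy, hzb⟩ := hz
      have hbz : G.Adj b z := by
        rcases hA2 z with rfl | rfl | rfl | h
        · exact hAb.symm
        · exact absurd rfl hzb
        · exact hBc
        · exact h
      exact noP4 z b x y hbz.symm hbx hxy hzx hzy (Ne.symm hyb)
    have hmeet2 : ∀ x y, G.Adj x y → x = b ∨ x = a ∨ y = b ∨ y = a := by
      intro x y hxy
      rcases hmeetb x y hxy with h | h
      · exact Or.inl h
      · exact Or.inr (Or.inr (Or.inl h))
    have hnc2 : ∀ x, G.Adj b x → G.Adj a x → False := by
      intro x h1 h2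
      rcases hmeetb a x h2 with h | h
      · exact hab' h
      · exact G.loopless.irrefl b (h ▸ h1)
    have hdom2 : ∀ x, x ≠ b → x ≠ a → G.Adj b x ∨ G.Adj a x := by
      intro x h1 h2
      rcases hA2 x with rfl | rfl | rfl | h
      · exact absurd rfl h2
      · exact absurd rfl h1
      · exact Or.inl hBc
      · exact Or.inl h
    exact Or.inr (iso_dlgraph hAb.symm hmeet2 hnc2 hdom2)
end
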